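/- arXiv:2203.13715 — 3 statements merged into one kernel-verified Lean document; each statement's English description precedes it below -/
import Mathlib

section
/- For real numbers α < β < 0, the integral over θ ∈ [0, π] of (e^{β sin θ} − e^{α sin θ})/sin θ dθ is bounded above by a universal constant times (π·α/β − 1) + 1 + (1/π)·(β/α)·e^{−π α/β}. -/
open Real

lemma stmt4_ptwise {α β : ℝ} (hab : α < β) (hb : β < 0) {θ : ℝ} (h0 : 0 ≤ θ) (h1 : θ ≤ π) :
    (Real.exp (β * Real.sin θ) - Real.exp (α * Real.sin θ)) / Real.sin θ ≤
      (β - α) * (Real.exp (2*β/π * θ) + Real.exp (2*β/π * (π - θ))) := by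
  have hπ := pi_pos
  have hβα : (0:ℝ) < β - α := by linarith
  have hsum : Real.exp (β * Real.sin θ) ≤ Real.exp (2*β/π * θ) + Real.exp (2*β/π * (π - θ)) := by
    rcases le_total θ (π/2) with h | h
    · have hs := Real.mul_le_sin h0 h
      have : β * Real.sin θ ≤ 2*β/π * θ := by
        have := mul_le_mul_of_nonpos_left hs hb.le
        calc β * Real.sin θ ≤ β * (2/π*θ) := this
        _ = 2*β/π*θ := by ring
      calc Real.exp (β * Real.sin θ) ≤ Real.exp (2*β/π * θ) := Real.exp_le_exp.2 this
      _ ≤ _ := le_add_of_nonneg_right (Real.exp_pos _).le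
    · have hs : 2/π * (π - θ) ≤ Real.sin θ := by
        have := Real.mul_le_sin (x := π - θ) (by linarith) (by linarith)
        rwa [Real.sin_pi_sub] at this
      have : β * Real.sin θ ≤ 2*β/π * (π - θ) := by
        have := mul_le_mul_of_nonpos_left hs hb.le
        calc β * Real.sin θ ≤ β * (2/π*(π-θ)) := this
        _ = 2*β/π*(π-θ) := by ring
      calc Real.exp (β * Real.sin θ) ≤ Real.exp (2*β/π * (π-θ)) := Real.exp_le_exp.2 this
      _ ≤ _ := le_add_of_nonneg_left (Real.exp_pos _).le
  rcases eq_or_lt_of_le (Real.sin_nonneg_of_nonneg_of_le_pi h0 h1) with hs | hs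
  · rw [← hs]; simp
    positivity
  · rw [div_le_iff₀ hs]
    have key : Real.exp (β * Real.sin θ) - Real.exp (α * Real.sin θ) ≤
        (β - α) * Real.exp (β * Real.sin θ) * Real.sin θ := by
      have h1 : Real.exp (β * Real.sin θ) * (1 + (α - β) * Real.sin θ) ≤ Real.exp (α * Real.sin θ) := by
        have := Real.add_one_le_exp ((α - β) * Real.sin θ)
        calc Real.exp (β * Real.sin θ) * (1 + (α - β) * Real.sin θ)
            ≤ Real.exp (β * Real.sin θ) * Real.exp ((α - β) * Real.sin θ) := by
              apply mul_le_mul_of_nonneg_left (by linarith) (Real.exp_pos _).le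
        _ = Real.exp (α * Real.sin θ) := by rw [← Real.exp_add]; ring_nf
      nlinarith [Real.exp_pos (β * Real.sin θ)]
    calc Real.exp (β * Real.sin θ) - Real.exp (α * Real.sin θ)
        ≤ (β - α) * Real.exp (β * Real.sin θ) * Real.sin θ := key
    _ ≤ (β - α) * (Real.exp (2*β/π * θ) + Real.exp (2*β/π * (π - θ))) * Real.sin θ := by
        apply mul_le_mul_of_nonneg_right _ hs.le
        exact mul_le_mul_of_nonneg_left hsum hβα.le

lemma stmt4_int1 (c : ℝ) (hc : c ≠ 0) :
    ∫ θ in (0:ℝ)..π, Real.exp (c * θ) = (Real.exp (c*π) - 1)/c := by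
  rw [intervalIntegral.integral_comp_mul_left (fun x => Real.exp x) hc]
  simp [integral_exp, div_eq_inv_mul]

lemma stmt4_int2 (c : ℝ) :
    ∫ θ in (0:ℝ)..π, Real.exp (c * (π - θ)) = ∫ θ in (0:ℝ)..π, Real.exp (c * θ) := by
  rw [intervalIntegral.integral_comp_sub_left (fun x => Real.exp (c * x)) π]
  norm_num

lemma stmt4_int (c : ℝ) (hc : c ≠ 0) (K : ℝ) :
    ∫ θ in (0:ℝ)..π, K * (Real.exp (c * θ) + Real.exp (c * (π - θ)))
      = K * (2 * ((Real.exp (c*π) - 1)/c)) := by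
  rw [intervalIntegral.integral_const_mul,
    intervalIntegral.integral_add
      ((by continuity : Continuous (fun x : ℝ => Real.exp (c * x))).intervalIntegrable _ _)
      ((by continuity : Continuous (fun x : ℝ => Real.exp (c * (π - x)))).intervalIntegrable _ _),
    stmt4_int1 c hc, stmt4_int2 c, stmt4_int1 c hc]
  ring

theorem stmt4 :
    ∃ C > (0:ℝ), ∀ α β : ℝ, α < β → β < 0 →
      ∫ θ in (0:ℝ)..π, (Real.exp (β * Real.sin θ) - Real.exp (α * Real.sin θ)) / Real.sin θ ≤
        C * ((π * α / β - 1) + 1 + (β / (π * α)) * Real.exp (-(π * α / β))) := by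
  refine ⟨1, one_pos, fun α β hab hb => ?_⟩
  have hπ := pi_pos
  have hα : α < 0 := hab.trans hb
  have hπα : π * α < 0 := mul_neg_of_pos_of_neg hπ hα
  have hRpos : 0 < π * α / β := div_pos_of_neg_of_neg hπα hb
  have hterm : 0 ≤ (β / (π * α)) * Real.exp (-(π * α / β)) :=
    mul_nonneg (div_pos_of_neg_of_neg hb hπα).le (Real.exp_pos _).le
  rw [one_mul]
  by_cases hi : IntervalIntegrable
      (fun θ => (Real.exp (β * Real.sin θ) - Real.exp (α * Real.sin θ)) / Real.sin θ)
      MeasureTheory.volume 0 π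
  · set c : ℝ := 2*β/π with hcdef
    have hc : c ≠ 0 := by
      apply div_ne_zero (by linarith) (by linarith)
    have hgint : IntervalIntegrable
        (fun θ => (β - α) * (Real.exp (c * θ) + Real.exp (c * (π - θ))))
        MeasureTheory.volume 0 π := by
      apply Continuous.intervalIntegrable
      continuity
    have hmono := intervalIntegral.integral_mono_on hπ.le hi hgint (fun θ hθ => by
      have := stmt4_ptwise hab hb hθ.1 hθ.2
      rw [hcdef]; exact this)
    rw [stmt4_int c hc (β - α)] at hmono
    refine hmono.trans ?_
    have hE : Real.exp (c*π) < 1 := Real.exp_lt_one_iff.2 (by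
      have : c * π = 2 * β := by rw [hcdef]; field_simp
      rw [this]; linarith)
    have hEpos := Real.exp_pos (c*π)
    have e1 : (β - α) * (2 * ((Real.exp (c*π) - 1)/c))
        = ((β - α) * (1 - Real.exp (c*π))) * (π / (-β)) := by
      rw [hcdef]; field_simp; ring
    have e2 : ((β - α) * (1 - Real.exp (c*π))) * (π / (-β)) ≤ (β - α) * (π / (-β)) := by
      apply mul_le_mul_of_nonneg_right _ (div_pos hπ (by linarith)).le
      nlinarith
    have hbne : β ≠ 0 := hb.ne
    have e3 : (β - α) * (π / (-β)) = π * α / β - π := by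
      field_simp
      ring
    rw [e1]
    refine e2.trans ?_
    rw [e3]
    linarith
  · rw [intervalIntegral.integral_undef hi]
    linarith
end

section
/- Let a ∈ ℝ, b ≠ 0, t > 0, ω with ω/(|b|t) ≥ max{1, 10⁴·(a/(2b))²}, ε = 1/10, and suppose ξ is 'near': (ξ + a/(2b))² ≤ (1/100)·ω/(|b|t) + (a/(2b))². Then for any θ ∈ [0, π], |Re[i·t·(a·(ξ + ε·e^{−iθ})² + b·(ξ + ε·e^{−iθ})³)]| ≤ (ω·ε/4)·sin θ. -/
open Complex

lemma re_eq_aux (a b t ξ s co : ℝ) :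
    (Complex.I * (t:ℂ) * ((a:ℂ) * ((ξ:ℂ) + (1/10 : ℂ) * ((co:ℂ) - (s:ℂ) * Complex.I))^2
        + (b:ℂ) * ((ξ:ℂ) + (1/10 : ℂ) * ((co:ℂ) - (s:ℂ) * Complex.I))^3)).re
    = t * (1/10) * s * (2*a*(ξ + (1/10)*co) + 3*b*(ξ + (1/10)*co)^2 - b*(1/100)*s^2) := by
  simp [Complex.mul_re, Complex.mul_im, pow_succ]
  ring

lemma bracket_bound (ξ c M co s : ℝ) (hM1 : 1 ≤ M) (hc : 10^4 * c^2 ≤ M)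
    (hnear : (ξ + c)^2 ≤ (1/100) * M + c^2) (hco2 : co^2 ≤ 1) (hs2 : s^2 ≤ 1) :
    |4*c*(ξ + (1/10)*co) + 3*(ξ + (1/10)*co)^2 - s^2/100| ≤ M/4 := by
  rw [abs_le]
  constructor
  · nlinarith [sq_nonneg (3*(ξ + (1/10)*co) + 2*c), sq_nonneg s]
  · nlinarith [sq_nonneg (ξ + c + c/3), sq_nonneg (ξ + c - co/10), sq_nonneg (c/3 + co/10)]

set_option maxHeartbeats 1000000 in
theorem stmt10 (a b t ω ξ : ℝ) (hb : b ≠ 0) (ht : 0 < t)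
    (hbig : max 1 (10^4 * (a / (2*b))^2) ≤ ω / (|b| * t))
    (hnear : (ξ + a / (2*b))^2 ≤ (1/100) * (ω / (|b| * t)) + (a / (2*b))^2)
    (θ : ℝ) (hθ : θ ∈ Set.Icc 0 Real.pi) :
    |(Complex.I * (t:ℂ) * ((a:ℂ) * ((ξ:ℂ) + (1/10 : ℂ) * Complex.exp (-Complex.I * (θ:ℂ)))^2
        + (b:ℂ) * ((ξ:ℂ) + (1/10 : ℂ) * Complex.exp (-Complex.I * (θ:ℂ)))^3)).re| ≤
      (ω * (1/10) / 4) * Real.sin θ := by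
  obtain ⟨hθ0, hθπ⟩ := hθ
  have hs : 0 ≤ Real.sin θ := Real.sin_nonneg_of_nonneg_of_le_pi hθ0 hθπ
  have hE : Complex.exp (-Complex.I * (θ:ℂ)) = (Real.cos θ : ℂ) - (Real.sin θ : ℂ) * Complex.I := by
    have h : -Complex.I * (θ:ℂ) = ((-θ : ℝ):ℂ) * Complex.I := by push_cast; ring
    rw [h, Complex.exp_mul_I, ← Complex.ofReal_cos, ← Complex.ofReal_sin,
      Real.cos_neg, Real.sin_neg]
    push_cast; ring
  rw [hE, re_eq_aux]
  set s := Real.sin θ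
  set co := Real.cos θ
  have hsc : s^2 + co^2 = 1 := Real.sin_sq_add_cos_sq θ
  have hbt : 0 < |b| * t := mul_pos (abs_pos.mpr hb) ht
  set c := a / (2*b) with hcdef
  set M := ω / (|b| * t) with hMdef
  have hM1 : (1:ℝ) ≤ M := le_trans (le_max_left _ _) hbig
  have hc : 10^4 * c^2 ≤ M := le_trans (le_max_right _ _) hbig
  have hω : ω = M * (|b| * t) := by rw [hMdef, div_mul_cancel₀ _ hbt.ne']
  have ha : a = 2*b*c := by rw [hcdef]; field_simp
  have hs2 : s^2 ≤ 1 := by nlinarith [sq_nonneg co]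
  have hco2 : co^2 ≤ 1 := by nlinarith [sq_nonneg s]
  have hnear' : (ξ + c)^2 ≤ (1/100) * M + c^2 := hnear
  clear_value s co c M
  have hbr := bracket_bound ξ c M co s hM1 hc hnear' hco2 hs2
  have hB : 2*a*(ξ + (1/10)*co) + 3*b*(ξ + (1/10)*co)^2 - b*(1/100)*s^2 = b * (4*c*(ξ + (1/10)*co) + 3*(ξ + (1/10)*co)^2 - s^2/100) := by
    rw [ha]; ring
  rw [hB]
  rw [abs_mul, abs_mul, abs_mul, abs_mul]
  have htabs : |t| = t := abs_of_pos ht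
  have hsabs : |s| = s := abs_of_nonneg hs
  rw [htabs, hsabs]
  have h110 : |(1/10 : ℝ)| = 1/10 := by norm_num
  rw [h110]
  calc t * (1/10) * s * (|b| * |4*c*(ξ + (1/10)*co) + 3*(ξ + (1/10)*co)^2 - s^2/100|)
      ≤ t * (1/10) * s * (|b| * (M/4)) := by
        apply mul_le_mul_of_nonneg_left
        · exact mul_le_mul_of_nonneg_left hbr (abs_nonneg b)
        · positivity
    _ = (ω * (1/10) / 4) * s := by rw [hω]; ring
end

section
/- Let a ∈ ℝ, b ≠ 0, t > 0, ω with ω/(|b|t) ≥ max{1, 10⁴·(a/(2b))²}, ε² = ω/(|b|t), and suppose ξ is 'far': (ξ + a/(2b))² > 100·ω/(|b|t) + (a/(2b))². Then, writing ξ_{a,b} = ξ + a/(2b), for all θ ∈ [0, π] one has 2(ξ_{a,b} + (3/2)ε cos θ)² + (ξ_{a,b} − a/(2b))² + (a/(2b) − ε cos θ)² − 3(a/(2b))² − (3/2)ε² cos²θ − ε² > 3·ω/(|b|t). -/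
/-!
Write `X = ξ + a/(2b)`, `c = a/(2b)` and `s = cos θ`. Dropping the squares `2(X + (3/2)εs)²` and
`(c - εs)²` and using `s² ≤ 1`, the left-hand side is at least `(X - c)² - 3c² - (5/2)ε²`.
The hypotheses give `|X| > 10|ε|` and `|c| ≤ |ε|/100`, so `(X - c)² ≥ (|X| - |c|)² > 9.99²ε²`,
which leaves ample room over `3c² + (11/2)ε² ≤ 5.6ε²`.
-/

lemma sub_sq_sub_le_of_sq_le_one (X c e s : ℝ) (hs : s ^ 2 ≤ 1) :
    (X - c) ^ 2 - 3 * c ^ 2 - 5 / 2 * e ^ 2 ≤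
      2 * (X + 3 / 2 * e * s) ^ 2 + (X - c) ^ 2 + (c - e * s) ^ 2
        - 3 * c ^ 2 - 3 / 2 * e ^ 2 * s ^ 2 - e ^ 2 := by
  have hes : e ^ 2 * s ^ 2 ≤ e ^ 2 := mul_le_of_le_one_right (sq_nonneg e) hs
  nlinarith [sq_nonneg (X + 3 / 2 * e * s), sq_nonneg (c - e * s)]

lemma sq_abs_sub_abs_le_sq_sub (x y : ℝ) : (|x| - |y|) ^ 2 ≤ (x - y) ^ 2 :=
  sq_le_sq.mpr (abs_abs_sub_abs_le_abs_sub x y)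

lemma lt_sub_sq_of_far (X c e : ℝ) (hc : 10 ^ 4 * c ^ 2 ≤ e ^ 2)
    (hX : X ^ 2 > 100 * e ^ 2 + c ^ 2) :
    3 * e ^ 2 < (X - c) ^ 2 - 3 * c ^ 2 - 5 / 2 * e ^ 2 := by
  have hc' : |100 * c| ≤ |e| := sq_le_sq.mp (by linarith)
  have hX' : |10 * e| < |X| := sq_lt_sq.mp (by nlinarith [sq_nonneg c])
  rw [abs_mul] at hc' hX'
  norm_num at hc' hX'
  have hgap : 999 / 100 * |e| < |X| - |c| := by linarith
  suffices h : 3 * e ^ 2 + 3 * c ^ 2 + 5 / 2 * e ^ 2 < (X - c) ^ 2 by linarith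
  calc 3 * e ^ 2 + 3 * c ^ 2 + 5 / 2 * e ^ 2
      ≤ (999 / 100 * |e|) ^ 2 := by rw [mul_pow, sq_abs]; linarith [sq_nonneg e]
    _ < (|X| - |c|) ^ 2 := pow_lt_pow_left₀ hgap (by positivity) two_ne_zero
    _ ≤ (X - c) ^ 2 := sq_abs_sub_abs_le_sq_sub X c

theorem stmt11_general (a b t ω ε ξ : ℝ)
    (hbig : max 1 (10^4 * (a / (2*b))^2) ≤ ω / (|b| * t))
    (hε2 : ε^2 = ω / (|b| * t))
    (hfar : (ξ + a / (2*b))^2 > 100 * (ω / (|b| * t)) + (a / (2*b))^2)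
    (θ : ℝ) :
    2 * ((ξ + a/(2*b)) + (3/2) * ε * Real.cos θ)^2
      + ((ξ + a/(2*b)) - a/(2*b))^2
      + (a/(2*b) - ε * Real.cos θ)^2
      - 3 * (a/(2*b))^2
      - (3/2) * ε^2 * (Real.cos θ)^2
      - ε^2 > 3 * (ω / (|b| * t)) := by
  rw [← hε2] at hbig hfar ⊢
  calc 3 * ε ^ 2
      < (ξ + a / (2 * b) - a / (2 * b)) ^ 2 - 3 * (a / (2 * b)) ^ 2 - 5 / 2 * ε ^ 2 :=
        lt_sub_sq_of_far _ _ _ (le_of_max_le_right hbig) hfar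
    _ ≤ _ := sub_sq_sub_le_of_sq_le_one _ _ _ _ (Real.cos_sq_le_one θ)

theorem stmt11 (a b t ω ε ξ : ℝ) (hb : b ≠ 0) (ht : 0 < t)
    (hbig : max 1 (10^4 * (a / (2*b))^2) ≤ ω / (|b| * t))
    (hε : 0 ≤ ε) (hε2 : ε^2 = ω / (|b| * t))
    (hfar : (ξ + a / (2*b))^2 > 100 * (ω / (|b| * t)) + (a / (2*b))^2)
    (θ : ℝ) (hθ : θ ∈ Set.Icc 0 Real.pi) :
    2 * ((ξ + a/(2*b)) + (3/2) * ε * Real.cos θ)^2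
      + ((ξ + a/(2*b)) - a/(2*b))^2
      + (a/(2*b) - ε * Real.cos θ)^2
      - 3 * (a/(2*b))^2
      - (3/2) * ε^2 * (Real.cos θ)^2
      - ε^2 > 3 * (ω / (|b| * t)) :=
  stmt11_general a b t ω ε ξ hbig hε2 hfar θ
end
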